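/- The nilpotent Lie algebra g_5 spanned by X_0, X_1, X_2, X_3, Y_1 with nonzero brackets [X_0,X_1]=X_2, [X_0,X_2]=X_3, [X_1,X_2]=Y_1 has characteristic sequence (3,1,1): the adjoint operator ad(X_0+X_1) restricted to the 5-dimensional algebra is nilpotent with Jordan block sizes (3,1,1), and no element X outside the derived subalgebra has adjoint operator with lexicographically larger Jordan block sequence. -/

import Mathlib

/-!
In coordinates, `ad u` vanishes on the centre `span {X_3, Y_1}`, and `(ad u)²` is the rank-one map
`v ↦ (u₀ v₁ - u₁ v₀) (u₀ X_3 + u₁ Y_1)` with values in the centre, so `(ad u)³ = 0`. The only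
nonzero block of `ad u`, from `span {X_0, X_1, X_2}` to `span {X_2, X_3, Y_1}`, is singular since
`[u, u] = 0`, so `rank (ad u) ≤ 2`. When the `X_0`-coordinate of `u` is nonzero, a `2 × 2` minor of
`ad u` and an entry of `(ad u)²` show that these bounds are attained.
-/

/-- Structure constants of the 5-dimensional nilpotent Lie algebra `g_5` with
basis `X_0 ↦ 0, X_1 ↦ 1, X_2 ↦ 2, X_3 ↦ 3, Y_1 ↦ 4` and nonzero brackets
`[X_0,X_1] = X_2`, `[X_0,X_2] = X_3`, `[X_1,X_2] = Y_1` (listed direction). -/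
noncomputable def strG5 (i j s : ℕ) : ℂ :=
  (if i = 0 ∧ (j = 1 ∨ j = 2) ∧ s = j + 1 then 1 else 0) +
  (if i = 1 ∧ j = 2 ∧ s = 4 then 1 else 0)

/-- Antisymmetrized structure constants of `g_5`. -/
noncomputable def CG5 (i j s : ℕ) : ℂ := strG5 i j s - strG5 j i s

/-- The matrix of the adjoint operator `ad(u)` of `g_5` on the basis:
`(adMat u).mulVec v` is the coordinate vector of `[u, v]`. -/
noncomputable def adMat (u : Fin 5 → ℂ) : Matrix (Fin 5) (Fin 5) ℂ :=
  fun s j => ∑ i : Fin 5, u i * CG5 i.1 j.1 s.1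

/-- The `k`-th basis vector of `ℂ^5`. -/
noncomputable def e (k : Fin 5) : Fin 5 → ℂ := Pi.single k 1

open Matrix

theorem Matrix.rank_lt_card_of_det_eq_zero {K n : Type*} [Field K] [Fintype n] [DecidableEq n]
    {A : Matrix n n K} (h : A.det = 0) : A.rank < Fintype.card n := by
  obtain ⟨v, hv, hAv⟩ := exists_mulVec_eq_zero_iff.2 h
  have hker : 1 ≤ Module.finrank K (LinearMap.ker A.mulVecLin) :=
    Submodule.one_le_finrank_iff.2 ((Submodule.ne_bot_iff _).2 ⟨v, hAv, hv⟩)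
  have := LinearMap.finrank_range_add_finrank_ker A.mulVecLin
  rw [Module.finrank_fintype_fun_eq_card] at this
  rw [Matrix.rank]
  omega

theorem Matrix.card_le_rank_of_det_submatrix_ne_zero {R m n k : Type*} [CommRing R] [IsDomain R]
    [Fintype n] [Fintype k] [DecidableEq k] (A : Matrix m n R) (r : k → m) (c : k → n)
    (h : (A.submatrix r c).det ≠ 0) : Fintype.card k ≤ A.rank :=
  (rank_of_det_ne_zero h).ge.trans (rank_submatrix_le A r c)

lemma adMat_eq (u : Fin 5 → ℂ) :
    adMat u = !![0, 0, 0, 0, 0; 0, 0, 0, 0, 0; -u 1, u 0, 0, 0, 0; -u 2, 0, u 0, 0, 0;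
      0, -u 2, u 1, 0, 0] := by
  ext s j
  fin_cases s <;> fin_cases j <;>
    simp [adMat, CG5, strG5, Fin.sum_univ_five]

lemma adMat_sq (u : Fin 5 → ℂ) :
    adMat u ^ 2 = vecMulVec ![0, 0, 0, u 0, u 1] ![-u 1, u 0, 0, 0, 0] := by
  rw [sq, adMat_eq]
  ext s j
  fin_cases s <;> fin_cases j <;> simp [mul_apply, Fin.sum_univ_five, vecMulVec]

lemma adMat_mulVec_center (u : Fin 5 → ℂ) (a b : ℂ) : adMat u *ᵥ ![0, 0, 0, a, b] = 0 := by
  rw [adMat_eq]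
  ext s
  fin_cases s <;> simp [mulVec, dotProduct, Fin.sum_univ_five]

lemma adMat_pow_three (u : Fin 5 → ℂ) : adMat u ^ 3 = 0 := by
  rw [pow_succ', adMat_sq, mul_vecMulVec, adMat_mulVec_center, zero_vecMulVec]

lemma rank_adMat_sq_le_one (u : Fin 5 → ℂ) : (adMat u ^ 2).rank ≤ 1 := by
  rw [adMat_sq]
  exact rank_vecMulVec_le _ _

lemma one_le_rank_adMat_sq {u : Fin 5 → ℂ} (hu : u 0 ≠ 0) : 1 ≤ (adMat u ^ 2).rank := by
  simpa using (adMat u ^ 2).card_le_rank_of_det_submatrix_ne_zero ![3] ![1]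
    (by rw [det_fin_one]; simp [adMat_sq, vecMulVec, hu])

/-- The block of `ad u` from `span {X_0, X_1, X_2}` to `span {X_2, X_3, Y_1}`, outside of which
`ad u` vanishes. -/
noncomputable def adBlock (u : Fin 5 → ℂ) : Matrix (Fin 3) (Fin 3) ℂ :=
  !![-u 1, u 0, 0; -u 2, 0, u 0; 0, -u 2, u 1]

lemma adMat_eq_mul_adBlock_mul (u : Fin 5 → ℂ) :
    adMat u = (!![0, 0, 0; 0, 0, 0; 1, 0, 0; 0, 1, 0; 0, 0, 1] : Matrix (Fin 5) (Fin 3) ℂ) *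
      adBlock u * (!![1, 0, 0, 0, 0; 0, 1, 0, 0, 0; 0, 0, 1, 0, 0] : Matrix (Fin 3) (Fin 5) ℂ) := by
  rw [adMat_eq, adBlock]
  ext s j
  fin_cases s <;> fin_cases j <;> simp [mul_apply, Fin.sum_univ_three]

-- `adBlock u` kills `(u 0, u 1, u 2)` because `[u, u] = 0`.
lemma det_adBlock (u : Fin 5 → ℂ) : (adBlock u).det = 0 := by
  rw [adBlock, det_fin_three]
  simp only [of_apply, cons_val', cons_val_zero, cons_val_one, cons_val, cons_val_fin_one]
  ring

lemma rank_adMat_le_two (u : Fin 5 → ℂ) : (adMat u).rank ≤ 2 := by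
  rw [adMat_eq_mul_adBlock_mul]
  calc _ ≤ (adBlock u).rank := (rank_mul_le_left _ _).trans (rank_mul_le_right _ _)
    _ ≤ 2 := Nat.lt_succ_iff.1 (by simpa using rank_lt_card_of_det_eq_zero (det_adBlock u))

lemma two_le_rank_adMat {u : Fin 5 → ℂ} (hu : u 0 ≠ 0) : 2 ≤ (adMat u).rank := by
  simpa using (adMat u).card_le_rank_of_det_submatrix_ne_zero ![2, 3] ![1, 2]
    (by rw [det_fin_two]; simp [adMat_eq, hu])

/-- A nilpotent `5 × 5` matrix has Jordan type `(3,1,1)` iff it and its square have ranks `2` and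
`1`, and the Jordan types lexicographically above `(3,1,1)` are exactly those of rank `≥ 3`. -/
theorem g5_characteristic_sequence :
    (adMat (e 0 + e 1)) ^ 3 = 0 ∧
    (adMat (e 0 + e 1)).rank = 2 ∧
    ((adMat (e 0 + e 1)) ^ 2).rank = 1 ∧
    (∀ u : Fin 5 → ℂ, u ∉ Submodule.span ℂ {e 2, e 3, e 4} →
      (adMat u) ^ 3 = 0 ∧ (adMat u).rank ≤ 2) := by
  have h0 : (e 0 + e 1 : Fin 5 → ℂ) 0 ≠ 0 := by simp [e]
  exact ⟨adMat_pow_three _, (rank_adMat_le_two _).antisymm (two_le_rank_adMat h0),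
    (rank_adMat_sq_le_one _).antisymm (one_le_rank_adMat_sq h0),
    fun u _ => ⟨adMat_pow_three u, rank_adMat_le_two u⟩⟩
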